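/- arXiv:2109.08898 — 4 statements merged into one kernel-verified Lean document; each statement's English description precedes it below -/
import Mathlib

section
/- For any C¹ function h with h(0)=0 and h'(y) > 0, and parameters α > m > 0, β > 0, the prey nullcline y = (1−x)(β+x) restricted to 0 < x < 1 intersects the predator nullcline x = mβ/(αh(y) − m) in at most two points; equivalently, the system has at most two interior equilibria. -/
/-!
Along the prey nullcline, an interior equilibrium with abscissa `x` is a zero of
`F x = h ((1 - x) * (β + x)) - (m / α + (m * β / α) / x)`. The first term is a concave
nondecreasing function of a concave function, hence concave, and the subtracted term is
strictly convex on `(0, ∞)`. So `F` is strictly concave on `(0, 1)`, and a strictly concave function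
is positive strictly between two of its zeros, so it has at most two zeros.
-/

open Set

theorem Set.encard_le_two_of_not_lt_lt {α : Type*} [LinearOrder α] {s : Set α}
    (hs : ∀ a ∈ s, ∀ b ∈ s, ∀ c ∈ s, a < b → ¬ b < c) : s.encard ≤ 2 := by
  by_cases hlt : ∃ a ∈ s, ∃ b ∈ s, a < b
  · obtain ⟨a, ha, b, hb, hab⟩ := hlt
    have hsub : s ⊆ {a, b} := by
      intro c hc
      by_contra hcab
      simp only [mem_insert_iff, mem_singleton_iff, not_or] at hcab
      rcases lt_or_gt_of_ne hcab.1 with hca | hac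
      · exact hs c hc a ha b hb hca hab
      rcases lt_or_gt_of_ne hcab.2 with hcb | hbc
      · exact hs a ha c hc b hb hac hcb
      · exact hs a ha b hb c hc hab hbc
    exact (encard_le_encard hsub).trans (encard_pair hab.ne).le
  · push Not at hlt
    have hsub : s.encard ≤ 1 :=
      encard_le_one_iff.2 fun a b ha hb => le_antisymm (hlt b hb a ha) (hlt a ha b hb)
    exact hsub.trans one_le_two

theorem StrictConcaveOn.encard_zeros_le_two {𝕜 β : Type*} [Field 𝕜] [LinearOrder 𝕜]
    [IsStrictOrderedRing 𝕜] [AddCommMonoid β] [LinearOrder β] [IsOrderedAddMonoid β]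
    [Module 𝕜 β] [PosSMulStrictMono 𝕜 β] {s : Set 𝕜} {f : 𝕜 → β}
    (hf : StrictConcaveOn 𝕜 s f) (b : β) : {x ∈ s | f x = b}.encard ≤ 2 := by
  refine encard_le_two_of_not_lt_lt fun x hx y hy z hz hxy hyz => ?_
  have hy_seg : y ∈ openSegment 𝕜 x z := by
    rw [openSegment_eq_Ioo (hxy.trans hyz)]
    exact ⟨hxy, hyz⟩
  have := hf.lt_on_openSegment hx.1 hz.1 (hxy.trans hyz).ne hy_seg
  rw [hx.2, hy.2, hz.2, min_self] at this
  exact lt_irrefl b this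

theorem ConcaveOn.comp_of_mapsTo {𝕜 E β γ : Type*} [Semiring 𝕜] [PartialOrder 𝕜]
    [AddCommMonoid E] [AddCommMonoid β] [PartialOrder β] [AddCommMonoid γ] [PartialOrder γ]
    [SMul 𝕜 E] [SMul 𝕜 β] [SMul 𝕜 γ] {s : Set E} {t : Set β} {f : E → β} {g : β → γ}
    (hg : ConcaveOn 𝕜 t g) (hg_mono : MonotoneOn g t) (hf : ConcaveOn 𝕜 s f)
    (hst : MapsTo f s t) : ConcaveOn 𝕜 s (g ∘ f) :=
  ⟨hf.1, fun _ hx _ hy _ _ ha hb hab =>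
    (hg.2 (hst hx) (hst hy) ha hb hab).trans <|
      hg_mono (hg.1 (hst hx) (hst hy) ha hb hab) (hst (hf.1 hx hy ha hb hab))
        (hf.2 hx hy ha hb hab)⟩

theorem strictConvexOn_const_div_Ioi {c : ℝ} (hc : 0 < c) :
    StrictConvexOn ℝ (Ioi 0) fun x : ℝ => c / x := by
  have hinv : StrictConvexOn ℝ (Ioi 0) fun x : ℝ => x ^ (-1 : ℤ) :=
    strictConvexOn_zpow (by norm_num) (by norm_num)
  refine ⟨convex_Ioi 0, fun x hx y hy hxy a b ha hb hab => ?_⟩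
  have key := hinv.2 hx hy hxy ha hb hab
  simp only [zpow_neg_one, smul_eq_mul] at key ⊢
  calc c / (a * x + b * y) = c * (a * x + b * y)⁻¹ := div_eq_mul_inv _ _
    _ < c * (a * x⁻¹ + b * y⁻¹) := mul_lt_mul_of_pos_left key hc
    _ = a * (c / x) + b * (c / y) := by ring

theorem concaveOn_univ_one_sub_mul_add (β : ℝ) :
    ConcaveOn ℝ univ fun x : ℝ => (1 - x) * (β + x) := by
  refine ⟨convex_univ, fun x _ y _ a b ha hb hab => ?_⟩
  obtain rfl : b = 1 - a := by linarith
  simp only [smul_eq_mul]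
  nlinarith [mul_nonneg (mul_nonneg ha hb) (sq_nonneg (x - y))]

section HasDerivAt

variable {D : Set ℝ} {f f' f'' : ℝ → ℝ}

theorem concaveOn_of_hasDerivAt2_nonpos (hD : Convex ℝ D)
    (hf : ∀ y ∈ D, HasDerivAt f (f' y) y) (hf' : ∀ y ∈ D, HasDerivAt f' (f'' y) y)
    (hf'' : ∀ y ∈ D, f'' y ≤ 0) : ConcaveOn ℝ D f :=
  concaveOn_of_hasDerivWithinAt2_nonpos hD
    (fun y hy => (hf y hy).continuousAt.continuousWithinAt)
    (fun y hy => (hf y (interior_subset hy)).hasDerivWithinAt)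
    (fun y hy => (hf' y (interior_subset hy)).hasDerivWithinAt)
    (fun y hy => hf'' y (interior_subset hy))

theorem monotoneOn_of_hasDerivAt_nonneg (hD : Convex ℝ D)
    (hf : ∀ y ∈ D, HasDerivAt f (f' y) y) (hf' : ∀ y ∈ D, 0 ≤ f' y) : MonotoneOn f D :=
  monotoneOn_of_hasDerivWithinAt_nonneg hD
    (fun y hy => (hf y hy).continuousAt.continuousWithinAt)
    (fun y hy => (hf y (interior_subset hy)).hasDerivWithinAt)
    (fun y hy => hf' y (interior_subset hy))

end HasDerivAt

theorem stmt6_general (h h' h'' : ℝ → ℝ) (α β m : ℝ)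
    (hm : 0 < m) (hαm : m < α) (hβ : 0 < β)
    (hd1 : ∀ y, 0 ≤ y → HasDerivAt h (h' y) y)
    (hd2 : ∀ y, 0 ≤ y → HasDerivAt h' (h'' y) y)
    (hpos : ∀ y, 0 ≤ y → 0 < h' y)
    (hneg : ∀ y, 0 ≤ y → h'' y < 0) :
    Set.encard {p : ℝ × ℝ | 0 < p.1 ∧ p.1 < 1 ∧ 0 < p.2 ∧
      p.2 = (1 - p.1) * (β + p.1) ∧
      α * p.1 * h p.2 / (p.1 + β) = m} ≤ 2 := by
  have hα : 0 < α := hm.trans hαm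
  set prey : ℝ → ℝ := fun x => (1 - x) * (β + x)
  set predator : ℝ → ℝ := fun x => m / α + m * β / α / x
  have hprey_nonneg : MapsTo prey (Ioo 0 1) (Ici 0) := fun x hx =>
    mul_nonneg (sub_nonneg.2 hx.2.le) (by linarith [hx.1])
  have hh : ConcaveOn ℝ (Ici 0) h :=
    concaveOn_of_hasDerivAt2_nonpos (convex_Ici 0) hd1 hd2 fun y hy => (hneg y hy).le
  have hprey : ConcaveOn ℝ (Ioo 0 1) (h ∘ prey) :=
    hh.comp_of_mapsTo
      (monotoneOn_of_hasDerivAt_nonneg (convex_Ici 0) hd1 fun y hy => (hpos y hy).le)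
      ((concaveOn_univ_one_sub_mul_add β).subset (subset_univ _) (convex_Ioo 0 1)) hprey_nonneg
  have hpredator : StrictConvexOn ℝ (Ioo 0 1) predator := by
    have := (strictConvexOn_const_div_Ioi (by positivity : 0 < m * β / α)).add_const (m / α)
    refine (this.subset Ioo_subset_Ioi_self (convex_Ioo 0 1)).congr fun x _ => ?_
    simp only [Pi.add_apply, predator, add_comm]
  have hsub : {p : ℝ × ℝ | 0 < p.1 ∧ p.1 < 1 ∧ 0 < p.2 ∧ p.2 = (1 - p.1) * (β + p.1) ∧
      α * p.1 * h p.2 / (p.1 + β) = m} ⊆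
      (fun x => (x, prey x)) '' {x ∈ Ioo 0 1 | (h ∘ prey - predator) x = 0} := by
    rintro ⟨x, y⟩ ⟨hx0, hx1, -, hy, hxy⟩
    dsimp only at hx0 hx1 hy hxy
    subst hy
    refine ⟨x, ⟨⟨hx0, hx1⟩, ?_⟩, rfl⟩
    simp only [Pi.sub_apply, Function.comp_apply, prey, predator]
    field_simp at hxy ⊢
    linarith
  exact (encard_le_encard hsub).trans <| (encard_image_le _ _).trans <|
    (hprey.sub_strictConvexOn hpredator).encard_zeros_le_two 0

/-- For an Allee function `h` (C², `h 0 = 0`, `h' > 0`, `h'' < 0`) and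
`α > m > 0`, `β > 0`, the system has at most two interior equilibria, i.e. the set of
intersections in the open first quadrant (with `0 < x < 1`) of the prey nullcline
`y = (1-x)(β+x)` and the predator nullcline `α x h(y)/(x+β) = m` has at most two
elements. -/
theorem stmt6 (h h' h'' : ℝ → ℝ) (α β m : ℝ)
    (hm : 0 < m) (hαm : m < α) (hβ : 0 < β)
    (h0 : h 0 = 0)
    (hd1 : ∀ y, 0 ≤ y → HasDerivAt h (h' y) y)
    (hd2 : ∀ y, 0 ≤ y → HasDerivAt h' (h'' y) y)
    (hpos : ∀ y, 0 ≤ y → 0 < h' y)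
    (hneg : ∀ y, 0 ≤ y → h'' y < 0) :
    Set.encard {p : ℝ × ℝ | 0 < p.1 ∧ p.1 < 1 ∧ 0 < p.2 ∧
      p.2 = (1 - p.1) * (β + p.1) ∧
      α * p.1 * h p.2 / (p.1 + β) = m} ≤ 2 :=
  stmt6_general h h' h'' α β m hm hαm hβ hd1 hd2 hpos hneg
end

section
/- Suppose the system has two interior equilibria E₁* = (x₁*, y₁*) and E₂* = (x₂*, y₂*) with 0 < x₁* < x₂* < 1 on the prey nullcline y = (1−x)(β+x). Then at E₂* the slope of the predator nullcline exceeds the slope of the prey nullcline, and consequently the determinant of the Jacobian at E₂* is negative; i.e., E₂* is a saddle point. -/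
/-!
Both equilibria lie on the prey nullcline `y = (1 - x)(β + x)`, so `x₁` and `x₂` are zeros of
`g(x) = h((1 - x)(β + x)) - m(β + x)/(α x)`. Since `h` is increasing and concave, `g` is strictly
concave on `(0, 1)`; as `g(x₁) = g(x₂)`, it is strictly decreasing at `x₂`. Multiplied by
`x₂(β + x₂)`, the inequality `g'(x₂) < 0` is exactly the comparison of the nullcline slopes, and the
Jacobian determinant at `E₂*` is a positive multiple of it.
-/

open Matrix

/-- Determinant of the Jacobian of the full vector field
`F(x,y) = (x(1-x) - xy/(β+x), α x y h(y)/(β+x) - m y)` at `(p, q)`. -/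
noncomputable def jacDet (α β m : ℝ) (h : ℝ → ℝ) (p q : ℝ) : ℝ :=
  deriv (fun x => x * (1 - x) - x * q / (β + x)) p *
      deriv (fun y => α * p * y * h y / (β + p) - m * y) q -
    deriv (fun y => p * (1 - p) - p * y / (β + p)) q *
      deriv (fun x => α * x * q * h q / (β + x) - m * q) p

open Set

theorem lt_zero_of_hasDerivAt_of_eq_of_strictAntiOn {f f' : ℝ → ℝ} {a b : ℝ} (hab : a < b)
    (hf : ∀ x ∈ Icc a b, HasDerivAt f (f' x) x) (hfab : f a = f b)
    (hf' : StrictAntiOn f' (Icc a b)) : f' b < 0 := by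
  obtain ⟨c, hc, hf'c⟩ := exists_hasDerivAt_eq_zero hab
    (fun x hx ↦ (hf x hx).continuousAt.continuousWithinAt) hfab
    (fun x hx ↦ hf x (Ioo_subset_Icc_self hx))
  exact hf'c ▸ hf' (Ioo_subset_Icc_self hc) (right_mem_Icc.mpr hab.le) hc.2

def preyNullcline (β x : ℝ) : ℝ := (1 - x) * (β + x)

/-- Its zeros in `(0, 1)` are the abscissae of the interior equilibria. -/
noncomputable def nullclineGap (h : ℝ → ℝ) (α β m x : ℝ) : ℝ :=
  h (preyNullcline β x) - m * (β + x) / (α * x)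

noncomputable def nullclineGapDeriv (h' : ℝ → ℝ) (α β m x : ℝ) : ℝ :=
  h' (preyNullcline β x) * (1 - β - 2 * x) + m * β / (α * x ^ 2)

section

variable {h h' h'' : ℝ → ℝ} {α β m x : ℝ}

theorem preyNullcline_nonneg (hβ : 0 ≤ β) (hx₀ : 0 ≤ x) (hx₁ : x ≤ 1) :
    0 ≤ preyNullcline β x :=
  mul_nonneg (by linarith) (by linarith)

theorem hasDerivAt_preyNullcline (β x : ℝ) :
    HasDerivAt (preyNullcline β) (1 - β - 2 * x) x := by
  have := ((hasDerivAt_id' x).const_sub 1).mul ((hasDerivAt_id' x).const_add β)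
  exact this.congr_deriv (by ring)

theorem hasDerivAt_nullclineGap (hα : α ≠ 0) (hx : x ≠ 0)
    (hh : HasDerivAt h (h' (preyNullcline β x)) (preyNullcline β x)) :
    HasDerivAt (nullclineGap h α β m) (nullclineGapDeriv h' α β m x) x := by
  have := (hh.comp x (hasDerivAt_preyNullcline β x)).sub
    ((((hasDerivAt_id' x).const_add β).const_mul m).div ((hasDerivAt_id' x).const_mul α)
      (mul_ne_zero hα hx))
  refine this.congr_deriv ?_
  rw [nullclineGapDeriv]
  field_simp
  ring

theorem hasDerivAt_nullclineGapDeriv (hα : α ≠ 0) (hx : x ≠ 0)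
    (hh' : HasDerivAt h' (h'' (preyNullcline β x)) (preyNullcline β x)) :
    HasDerivAt (nullclineGapDeriv h' α β m)
      (h'' (preyNullcline β x) * (1 - β - 2 * x) ^ 2 - 2 * h' (preyNullcline β x)
        - 2 * m * β / (α * x ^ 3)) x := by
  have hlin : HasDerivAt (fun x : ℝ ↦ 1 - β - 2 * x) (-2) x := by
    simpa using ((hasDerivAt_id' x).const_mul 2).const_sub (1 - β)
  have := ((hh'.comp x (hasDerivAt_preyNullcline β x)).mul hlin).add
    ((hasDerivAt_const x (m * β)).div ((hasDerivAt_pow 2 x).const_mul α)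
      (mul_ne_zero hα (pow_ne_zero 2 hx)))
  refine this.congr_deriv ?_
  rw [Function.comp_apply]
  field_simp
  ring

theorem nullclineGap_eq_zero (hα : α ≠ 0) (hx : x ≠ 0) (hxβ : x + β ≠ 0)
    (heq : α * x * h (preyNullcline β x) / (x + β) = m) : nullclineGap h α β m x = 0 := by
  rw [nullclineGap, ← heq]
  field_simp
  ring

theorem mul_nullclineGapDeriv_eq (hα : α ≠ 0) (hx : x ≠ 0) (hxβ : x + β ≠ 0)
    (heq : α * x * h (preyNullcline β x) / (x + β) = m) :
    x * (β + x) * nullclineGapDeriv h' α β m x =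
      (β + x) * x * h' (preyNullcline β x) * (1 - β - 2 * x) + β * h (preyNullcline β x) := by
  rw [nullclineGapDeriv, ← heq]
  field_simp
  ring

theorem strictAntiOn_nullclineGapDeriv {a b : ℝ} (hα : 0 < α) (hm : 0 ≤ m) (hβ : 0 ≤ β)
    (ha : 0 < a) (hb : b < 1)
    (hd2 : ∀ y, 0 ≤ y → HasDerivAt h' (h'' y) y)
    (hpos : ∀ y, 0 ≤ y → 0 < h' y) (hconc : ∀ y, 0 ≤ y → h'' y ≤ 0) :
    StrictAntiOn (nullclineGapDeriv h' α β m) (Icc a b) := by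
  have hderiv : ∀ x ∈ Icc a b, HasDerivAt (nullclineGapDeriv h' α β m)
      (h'' (preyNullcline β x) * (1 - β - 2 * x) ^ 2 - 2 * h' (preyNullcline β x)
        - 2 * m * β / (α * x ^ 3)) x := fun x hx ↦
    hasDerivAt_nullclineGapDeriv hα.ne' (ha.trans_le hx.1).ne'
      (hd2 _ (preyNullcline_nonneg hβ (by linarith [hx.1]) (by linarith [hx.2])))
  refine strictAntiOn_of_hasDerivWithinAt_neg (convex_Icc a b)
    (fun x hx ↦ (hderiv x hx).continuousAt.continuousWithinAt)
    (fun x hx ↦ (hderiv x (interior_subset hx)).hasDerivWithinAt) fun x hx ↦ ?_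
  rw [interior_Icc] at hx
  have hx₀ : 0 < x := ha.trans hx.1
  have hP := preyNullcline_nonneg hβ hx₀.le (by linarith [hx.2])
  have hconcave := mul_nonpos_of_nonpos_of_nonneg (hconc _ hP) (sq_nonneg (1 - β - 2 * x))
  have hpred : 0 ≤ 2 * m * β / (α * x ^ 3) := by positivity
  linarith [hpos _ hP]

/-- The left side is `(β + b) b h'(y) (s₁ - s₂)`, where `s₁ = 1 - β - 2b` and
`s₂ = -β h(y) / ((β + b) b h'(y))` are the slopes of the prey and predator nullclines at `b`. -/
theorem nullcline_slope_gap_neg {a b : ℝ} (hα : 0 < α) (hm : 0 ≤ m) (hβ : 0 ≤ β)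
    (hd1 : ∀ y, 0 ≤ y → HasDerivAt h (h' y) y)
    (hd2 : ∀ y, 0 ≤ y → HasDerivAt h' (h'' y) y)
    (hpos : ∀ y, 0 ≤ y → 0 < h' y) (hconc : ∀ y, 0 ≤ y → h'' y ≤ 0)
    (ha : 0 < a) (hab : a < b) (hb : b < 1)
    (hea : α * a * h (preyNullcline β a) / (a + β) = m)
    (heb : α * b * h (preyNullcline β b) / (b + β) = m) :
    (β + b) * b * h' (preyNullcline β b) * (1 - β - 2 * b) + β * h (preyNullcline β b) < 0 := by
  have hb₀ : 0 < b := ha.trans hab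
  have hgap : nullclineGap h α β m a = nullclineGap h α β m b := by
    rw [nullclineGap_eq_zero hα.ne' ha.ne' (by positivity) hea,
      nullclineGap_eq_zero hα.ne' hb₀.ne' (by positivity) heb]
  have hderiv_neg : nullclineGapDeriv h' α β m b < 0 :=
    lt_zero_of_hasDerivAt_of_eq_of_strictAntiOn hab
      (fun x hx ↦ hasDerivAt_nullclineGap hα.ne' (ha.trans_le hx.1).ne'
        (hd1 _ (preyNullcline_nonneg hβ (by linarith [hx.1]) (by linarith [hx.2]))))
      hgap (strictAntiOn_nullclineGapDeriv hα hm hβ ha hb hd2 hpos hconc)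
  rw [← mul_nullclineGapDeriv_eq hα.ne' hb₀.ne' (by positivity) heb]
  exact mul_neg_of_pos_of_neg (by positivity) hderiv_neg

theorem jacDet_eq {d p q : ℝ} (hp : β + p ≠ 0) (hh : HasDerivAt h d q) :
    jacDet α β m h p q =
      (1 - 2 * p - q * β / (β + p) ^ 2) * ((α * p * h q + α * p * q * d) / (β + p) - m)
        + p / (β + p) * (α * q * h q * β / (β + p) ^ 2) := by
  have hA : HasDerivAt (fun x ↦ x * (1 - x) - x * q / (β + x))
      (1 - 2 * p - q * β / (β + p) ^ 2) p := by
    refine (((hasDerivAt_id' p).mul ((hasDerivAt_id' p).const_sub 1)).sub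
      (((hasDerivAt_id' p).mul_const q).div ((hasDerivAt_id' p).const_add β) hp)).congr_deriv ?_
    field_simp
    ring
  have hB : HasDerivAt (fun y ↦ α * p * y * h y / (β + p) - m * y)
      ((α * p * h q + α * p * q * d) / (β + p) - m) q := by
    refine (((((hasDerivAt_id' q).const_mul (α * p)).mul hh).div_const (β + p)).sub
      ((hasDerivAt_id' q).const_mul m)).congr_deriv ?_
    ring
  have hC : HasDerivAt (fun y ↦ p * (1 - p) - p * y / (β + p)) (-(p / (β + p))) q := by
    refine ((hasDerivAt_const q (p * (1 - p))).sub
      (((hasDerivAt_id' q).const_mul p).div_const (β + p))).congr_deriv ?_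
    ring
  have hD : HasDerivAt (fun x ↦ α * x * q * h q / (β + x) - m * q)
      (α * q * h q * β / (β + p) ^ 2) p := by
    refine ((((((hasDerivAt_id' p).const_mul α).mul_const q).mul_const (h q)).div
      ((hasDerivAt_id' p).const_add β) hp).sub_const (m * q)).congr_deriv ?_
    field_simp
    ring
  rw [jacDet, hA.deriv, hB.deriv, hC.deriv, hD.deriv]
  ring

theorem jacDet_eq_of_equilibrium {d p : ℝ} (hβp : β + p ≠ 0)
    (hh : HasDerivAt h d (preyNullcline β p))
    (heq : α * p * h (preyNullcline β p) / (p + β) = m) :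
    jacDet α β m h p (preyNullcline β p) =
      α * p * preyNullcline β p / (β + p) ^ 3 *
        ((β + p) * p * d * (1 - β - 2 * p) + β * h (preyNullcline β p)) := by
  rw [jacDet_eq hβp hh, ← heq, preyNullcline]
  have : p + β ≠ 0 := by rwa [add_comm]
  field_simp
  ring

end

theorem stmt7_general (h h' h'' : ℝ → ℝ) (α β m : ℝ) (x₁ y₁ x₂ y₂ : ℝ)
    (hm : 0 < m) (hαm : m < α) (hβ : 0 < β)
    (hd1 : ∀ y, 0 ≤ y → HasDerivAt h (h' y) y)
    (hd2 : ∀ y, 0 ≤ y → HasDerivAt h' (h'' y) y)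
    (hpos : ∀ y, 0 ≤ y → 0 < h' y)
    (hneg : ∀ y, 0 ≤ y → h'' y < 0)
    (hx1 : 0 < x₁) (h12 : x₁ < x₂) (hx2 : x₂ < 1)
    (p1 : y₁ = (1 - x₁) * (β + x₁)) (p2 : y₂ = (1 - x₂) * (β + x₂))
    (q1 : α * x₁ * h y₁ / (x₁ + β) = m) (q2 : α * x₂ * h y₂ / (x₂ + β) = m) :
    1 - β - 2 * x₂ < -(β * h y₂) / ((β + x₂) * x₂ * h' y₂) ∧
    jacDet α β m h x₂ y₂ < 0 := by
  obtain rfl : y₁ = preyNullcline β x₁ := p1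
  obtain rfl : y₂ = preyNullcline β x₂ := p2
  have hα : 0 < α := hm.trans hαm
  have hx₂ : 0 < x₂ := hx1.trans h12
  have hy₂ : 0 < preyNullcline β x₂ := mul_pos (by linarith) (by linarith)
  have hslope := nullcline_slope_gap_neg hα hm.le hβ.le hd1 hd2 hpos
    (fun y hy ↦ (hneg y hy).le) hx1 h12 hx2 q1 q2
  have hh'₂ := hpos _ hy₂.le
  refine ⟨?_, ?_⟩
  · rw [lt_div_iff₀ (by positivity)]
    linarith
  · rw [jacDet_eq_of_equilibrium (by positivity) (hd1 _ hy₂.le) q2]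
    exact mul_neg_of_pos_of_neg (by positivity) hslope

/-- If the system has two interior equilibria `(x₁,y₁)` and `(x₂,y₂)`
with `0 < x₁ < x₂ < 1`, then at the second one the slope of the predator nullcline
exceeds the slope of the prey nullcline, and the Jacobian determinant there is
negative, i.e. `(x₂, y₂)` is a saddle. -/
theorem stmt7 (h h' h'' : ℝ → ℝ) (α β m : ℝ) (x₁ y₁ x₂ y₂ : ℝ)
    (hm : 0 < m) (hαm : m < α) (hβ : 0 < β)
    (hd1 : ∀ y, 0 ≤ y → HasDerivAt h (h' y) y)
    (hd2 : ∀ y, 0 ≤ y → HasDerivAt h' (h'' y) y)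
    (hpos : ∀ y, 0 ≤ y → 0 < h' y)
    (hneg : ∀ y, 0 ≤ y → h'' y < 0)
    (hx1 : 0 < x₁) (h12 : x₁ < x₂) (hx2 : x₂ < 1)
    (hy1 : 0 < y₁) (hy2 : 0 < y₂)
    (p1 : y₁ = (1 - x₁) * (β + x₁)) (p2 : y₂ = (1 - x₂) * (β + x₂))
    (q1 : α * x₁ * h y₁ / (x₁ + β) = m) (q2 : α * x₂ * h y₂ / (x₂ + β) = m) :
    1 - β - 2 * x₂ < -(β * h y₂) / ((β + x₂) * x₂ * h' y₂) ∧
    jacDet α β m h x₂ y₂ < 0 :=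
  stmt7_general h h' h'' α β m x₁ y₁ x₂ y₂ hm hαm hβ hd1 hd2 hpos hneg hx1 h12 hx2 p1 p2 q1 q2
end

section
/- At a saddle-node candidate equilibrium (x̄, ȳ) with zero Jacobian determinant, the quadratic transversality quantity wᵀD²F(v,v) = −2αx̄ȳh'(ȳ)/(β+x̄) − (βȳh(ȳ)/(β+x̄)²)·[2 + 2β/(x̄(β+x̄)) − βh(ȳ)h''(ȳ)/(x̄(β+x̄)(h'(ȳ))²)] is strictly negative whenever h(ȳ) > 0, h'(ȳ) > 0 and h''(ȳ) < 0. -/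
/-- At a saddle-node candidate equilibrium `(x̄, ȳ)` the transversality
quantity `wᵀ D²F (v,v)` is strictly negative whenever `h(ȳ) > 0`, `h'(ȳ) > 0` and
`h''(ȳ) < 0`. -/
theorem stmt11 (h : ℝ → ℝ) (α β m xb yb : ℝ)
    (hα : 0 < α) (hβ : 0 < β) (hm : 0 < m)
    (hxb : 0 < xb) (hyb : 0 < yb)
    (hh : 0 < h yb) (hh' : 0 < deriv h yb) (hh'' : deriv (deriv h) yb < 0) :
    -(2 * α * xb * yb * deriv h yb) / (β + xb) -
      (β * yb * h yb / (β + xb) ^ 2) *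
        (2 + 2 * β / (xb * (β + xb)) -
          β * h yb * deriv (deriv h) yb / (xb * (β + xb) * (deriv h yb) ^ 2)) < 0 := by
  have hbx : 0 < β + xb := by linarith
  have h1 : -(2 * α * xb * yb * deriv h yb) / (β + xb) < 0 := by
    apply div_neg_of_neg_of_pos _ hbx
    have : 0 < 2 * α * xb * yb * deriv h yb := by positivity
    linarith
  have h2 : 0 < (β * yb * h yb / (β + xb) ^ 2) *
      (2 + 2 * β / (xb * (β + xb)) -
        β * h yb * deriv (deriv h) yb / (xb * (β + xb) * (deriv h yb) ^ 2)) := by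
    apply mul_pos (by positivity)
    have ha : 0 < 2 * β / (xb * (β + xb)) := by positivity
    have hb : β * h yb * deriv (deriv h) yb / (xb * (β + xb) * (deriv h yb) ^ 2) < 0 := by
      apply div_neg_of_neg_of_pos _ (by positivity)
      have : 0 < β * h yb := by positivity
      nlinarith
    linarith
  linarith
end

section
/- For the system dx/dt = x(1−x) − xy, dy/dt = αxy²/(y+δ) − my, the quadratic αx² − (α+m)x + m(1+δ) has two distinct roots in (0,1) if and only if (α+m)² > 4αm(1+δ) and m(1+δ) < α and certain sign conditions hold; in particular, if δ ≥ (α−m)²/(4αm), there is no interior equilibrium with two distinct roots, so strengthening the Allee effect (increasing δ) eventually destroys coexistence via a saddle-node collision at δ = (α−m)²/(4αm). -/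
lemma stmt18aux (α δ m : ℝ) (hm : 0 < m) (hαm : m < α) (hδ : 0 < δ)
    (h : ∃ x₁ x₂ : ℝ, x₁ ≠ x₂ ∧ x₁ ∈ Set.Ioo (0:ℝ) 1 ∧ x₂ ∈ Set.Ioo (0:ℝ) 1 ∧
        α * x₁ ^ 2 - (α + m) * x₁ + m * (1 + δ) = 0 ∧
        α * x₂ ^ 2 - (α + m) * x₂ + m * (1 + δ) = 0) :
    (α + m) ^ 2 > 4 * α * m * (1 + δ) ∧ m * (1 + δ) < α := by
  obtain ⟨x₁, x₂, hne, ⟨h10, h11⟩, ⟨h20, h21⟩, e1, e2⟩ := h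
  have hα : 0 < α := hm.trans hαm
  -- sum: α(x₁+x₂) = α+m
  have hsum : α * (x₁ + x₂) = α + m := by
    have hdiff : (x₁ - x₂) * (α * (x₁ + x₂) - (α + m)) = 0 := by nlinarith [e1, e2]
    rcases mul_eq_zero.1 hdiff with h | h
    · exact absurd (sub_eq_zero.1 h) hne
    · linarith [sub_eq_zero.1 h]
  -- product: α x₁ x₂ = m(1+δ)
  have hprod : α * (x₁ * x₂) = m * (1 + δ) := by nlinarith [e1]
  constructor
  · have : (α + m) ^ 2 - 4 * α * m * (1 + δ) = α ^ 2 * (x₁ - x₂) ^ 2 := by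
      nlinarith [hsum, hprod]
    nlinarith [sq_pos_of_ne_zero (sub_ne_zero.2 hne), sq_pos_of_ne_zero hα.ne']
  · have : x₁ * x₂ < 1 := by nlinarith
    nlinarith [hprod]

/-- For `q(x) = αx² - (α+m)x + m(1+δ)` with `α > m > 0`, `δ > 0`:
the discriminant identity `(α+m)² - 4αm(1+δ) = (α-m)² - 4αmδ` holds; if `q` has two
distinct roots in `(0,1)` then `(α+m)² > 4αm(1+δ)` and `m(1+δ) < α`; and if
`δ ≥ (α-m)²/(4αm)` then `q` has no two distinct roots in `(0,1)`, so strengthening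
the Allee effect eventually destroys coexistence via a saddle-node collision at
`δ = (α-m)²/(4αm)`. -/
theorem stmt18 (α δ m : ℝ) (hm : 0 < m) (hαm : m < α) (hδ : 0 < δ) :
    ((α + m) ^ 2 - 4 * α * m * (1 + δ) = (α - m) ^ 2 - 4 * α * m * δ) ∧
    ((∃ x₁ x₂ : ℝ, x₁ ≠ x₂ ∧ x₁ ∈ Set.Ioo (0:ℝ) 1 ∧ x₂ ∈ Set.Ioo (0:ℝ) 1 ∧
        α * x₁ ^ 2 - (α + m) * x₁ + m * (1 + δ) = 0 ∧
        α * x₂ ^ 2 - (α + m) * x₂ + m * (1 + δ) = 0) →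
      (α + m) ^ 2 > 4 * α * m * (1 + δ) ∧ m * (1 + δ) < α) ∧
    (δ ≥ (α - m) ^ 2 / (4 * α * m) →
      ¬∃ x₁ x₂ : ℝ, x₁ ≠ x₂ ∧ x₁ ∈ Set.Ioo (0:ℝ) 1 ∧ x₂ ∈ Set.Ioo (0:ℝ) 1 ∧
        α * x₁ ^ 2 - (α + m) * x₁ + m * (1 + δ) = 0 ∧
        α * x₂ ^ 2 - (α + m) * x₂ + m * (1 + δ) = 0) := by
  have hα : 0 < α := hm.trans hαm
  refine ⟨by ring, fun h => stmt18aux α δ m hm hαm hδ h, fun hge h => ?_⟩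
  have h1 := (stmt18aux α δ m hm hαm hδ h).1
  have h2 : (α - m) ^ 2 ≤ 4 * α * m * δ := by
    have := (div_le_iff₀ (by positivity : (0:ℝ) < 4 * α * m)).1 hge
    linarith
  nlinarith
end
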